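/- arXiv:math/9601205 — 3 statements merged into one kernel-verified Lean document; each statement's English description precedes it below -/
import Mathlib

section
/- Let τ be an injective map of dyadic intervals to dyadic intervals, let C be a collection of dyadic intervals such that τ(C) satisfies the M-Carleson condition, and let x = Σ_{I∈C} x_I h_I with all |x_I| ≤ c. Then for the rearranged function Tx = Σ_{I∈C} x_I h_{τ(I)} one has sup_{I∈C} |x_I| ≤ ‖Tx‖_BMO ≤ M^{1/2} c, i.e. {h_{τ(I)} : I ∈ C} is M^{1/2}-equivalent in BMO to the unit vector basis of ℓ^∞ indexed by C. -/
open MeasureTheory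

/-- A dyadic interval `[k/2^n, (k+1)/2^n)` of `[0,1)`. -/
structure DI where
  n : ℕ
  k : ℕ
  hk : k < 2 ^ n

namespace DI

/-- The underlying set of a dyadic interval. -/
def carrier (I : DI) : Set ℝ := Set.Ico ((I.k : ℝ) / 2 ^ I.n) ((I.k + 1 : ℝ) / 2 ^ I.n)

/-- The length `|I| = 2^{-n}` of a dyadic interval. -/
noncomputable def len (I : DI) : ENNReal := ENNReal.ofReal ((2 : ℝ)⁻¹ ^ I.n)

end DI

/-- The Carleson sum `∑_{I ∈ L, I ⊆ J} |I|`. -/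
noncomputable def carlesonSum (L : Set DI) (J : DI) : ENNReal :=
  ∑' I : {I : DI // I ∈ L ∧ I.carrier ⊆ J.carrier}, I.1.len

/-- `L` satisfies the `M`-Carleson condition. -/
def CarlesonLE (L : Set DI) (M : ENNReal) : Prop :=
  ∀ J : DI, carlesonSum L J ≤ M * J.len

/-- The Carleson constant `⟦L⟧ = sup_J (1/|J|) ∑_{I ∈ L, I ⊆ J} |I|`. -/
noncomputable def carlesonConst (L : Set DI) : ENNReal :=
  ⨆ J : DI, carlesonSum L J / J.len

/-- The square of the dyadic BMO norm of `x = ∑ x_I h_I`,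
`‖x‖² = sup_J (1/|J|) ∑_{I ⊆ J} x_I² |I|`, in terms of the Haar coefficients. -/
noncomputable def bmoSq (x : DI → ℝ) : ENNReal :=
  ⨆ J : DI, (∑' I : {I : DI // I.carrier ⊆ J.carrier},
      ENNReal.ofReal ((x I.1) ^ 2) * I.1.len) / J.len

/-- `|L*|`: the Lebesgue measure of the set covered by the collection `L`. -/
noncomputable def covMeas (L : Set DI) : ENNReal := volume (⋃ I ∈ L, I.carrier)

/-- `y` is the coefficient function of `Tx` where `T h_I = h_{τ(I)}` and `x` has
coefficients `x_I`. -/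
def HaarCompat (τ : DI → DI) (x y : DI → ℝ) : Prop :=
  (∀ I, y (τ I) = x I) ∧ ∀ J, J ∉ Set.range τ → y J = 0

/-- The maximal elements of a collection of dyadic intervals, under inclusion. -/
def maxSet (S : Set DI) : Set DI :=
  {I | I ∈ S ∧ ∀ K ∈ S, I.carrier ⊆ K.carrier → I = K}


lemma DI.len_ne_zero (I : DI) : I.len ≠ 0 := by
  simp only [DI.len, ne_eq, ENNReal.ofReal_eq_zero, not_le]
  positivity

lemma DI.len_ne_top (I : DI) : I.len ≠ ⊤ := ENNReal.ofReal_ne_top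

/-- If `⟦τ(C)⟧ ≤ M` then `{h_{τ(I)} : I ∈ C}` is `M^{1/2}`-equivalent to the unit
vector basis of `ℓ^∞`: `sup_{I∈C} |x_I| ≤ ‖Tx‖ ≤ M^{1/2} c`, in squared form. -/
theorem stmt4 (τ : DI → DI) (hτ : Function.Injective τ)
    (C : Set DI) (M : ENNReal) (hM : CarlesonLE (τ '' C) M)
    (x : DI → ℝ) (c : ℝ) (hc : ∀ I ∈ C, |x I| ≤ c)
    (y : DI → ℝ) (hy1 : ∀ I ∈ C, y (τ I) = x I)
    (hy2 : ∀ J, J ∉ τ '' C → y J = 0) :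
    (∀ I ∈ C, ENNReal.ofReal ((x I) ^ 2) ≤ bmoSq y) ∧
      bmoSq y ≤ M * ENNReal.ofReal (c ^ 2) := by
  constructor
  · intro I hI
    have hle : ENNReal.ofReal ((x I) ^ 2) * (τ I).len / (τ I).len ≤ bmoSq y := by
      refine le_trans ?_ (le_iSup _ (τ I))
      apply ENNReal.div_le_div_right
      have := ENNReal.le_tsum (f := fun (I' : {I' : DI // I'.carrier ⊆ (τ I).carrier}) =>
        ENNReal.ofReal ((y I'.1) ^ 2) * I'.1.len) ⟨τ I, subset_rfl⟩
      simpa [hy1 I hI] using this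
    rwa [mul_div_assoc, ENNReal.div_self (DI.len_ne_zero _) (DI.len_ne_top _), mul_one] at hle
  · rw [bmoSq]
    refine iSup_le fun J => ?_
    have key : (∑' I : {I : DI // I.carrier ⊆ J.carrier},
        ENNReal.ofReal ((y I.1) ^ 2) * I.1.len)
        ≤ ENNReal.ofReal (c ^ 2) * carlesonSum (τ '' C) J := by
      rw [carlesonSum, ← ENNReal.tsum_mul_left]
      set e : {I : DI // I ∈ τ '' C ∧ I.carrier ⊆ J.carrier} →
          {I : DI // I.carrier ⊆ J.carrier} := fun i => ⟨i.1, i.2.2⟩ with he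
      have hinj : Function.Injective e := by
        intro a b hab
        have h : (e a).1 = (e b).1 := congrArg Subtype.val hab
        exact Subtype.ext h
      have hz : ∀ i ∉ Set.range e,
          ENNReal.ofReal ((y i.1) ^ 2) * i.1.len = 0 := by
        intro i hi
        have : i.1 ∉ τ '' C := by
          intro hmem
          exact hi ⟨⟨i.1, hmem, i.2⟩, rfl⟩
        rw [hy2 _ this]
        simp
      rw [← Function.Injective.tsum_eq hinj (Function.support_subset_iff'.mpr hz)]
      refine ENNReal.tsum_le_tsum fun i => ?_
      obtain ⟨I0, hI0, hI0e⟩ := i.2.1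
      have : y (e i).1 = x I0 := by rw [he]; simp only [← hI0e]; exact hy1 I0 hI0
      rw [this]
      have := hc I0 hI0
      have h2 : (x I0) ^ 2 ≤ c ^ 2 := by
        have := abs_nonneg (x I0)
        nlinarith [sq_abs (x I0)]
      exact mul_le_mul_left (ENNReal.ofReal_le_ofReal h2) _
    calc (∑' I : {I : DI // I.carrier ⊆ J.carrier},
          ENNReal.ofReal ((y I.1) ^ 2) * I.1.len) / J.len
        ≤ (ENNReal.ofReal (c ^ 2) * (M * J.len)) / J.len := by
          exact ENNReal.div_le_div_right (key.trans (mul_le_mul_right (hM J) _)) _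
      _ = M * ENNReal.ofReal (c ^ 2) * (J.len / J.len) := by
          rw [show ENNReal.ofReal (c ^ 2) * (M * J.len) =
            (M * ENNReal.ofReal (c ^ 2)) * J.len by ring, mul_div_assoc]
      _ = M * ENNReal.ofReal (c ^ 2) := by
          rw [ENNReal.div_self (DI.len_ne_zero _) (DI.len_ne_top _), mul_one]
end

section
/- (Main Lemma) Let τ be an injective map on dyadic intervals such that ⟦τ(E)⟧ ≤ M whenever E is a collection of pairwise disjoint dyadic intervals. Then for every A ≥ 1 and every dyadic interval I₀ there exists a collection C of pairwise disjoint dyadic intervals contained in I₀ such that: (i) Σ_{L∈C} |L| ≤ M|I₀|/A; and (ii) setting L = { I dyadic : I ⊆ I₀ and I is not contained in any member of C }, for every I ∈ L one has |τ(I)|/|I| ≤ A(|τ(L)*| + |τ(C)*|)/|I₀|. -/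
/-! Stop at a self-consistent level. For a level `Y`, call `I ⊆ I₀` stopping if
`|τ(I)|/|I| > A Y/|I₀|`, and let `C` be the maximal stopping intervals. As `C` is disjoint,
the Carleson hypothesis bounds `∑_{L∈C} |τ(L)|` by `M |τ(C)*|`, so
`∑_{L∈C} |L| ≤ M |I₀| |τ(C)*| / (A Y)`, which is at most `M |I₀|/A` once `|τ(C)*| ≤ Y`.
Intervals of `L` are not stopping, so `|τ(I)|/|I| ≤ A Y/|I₀|`, which gives (ii) once
`Y ≤ |τ(L)*| + |τ(C)*|`. Both hold when `Y = |τ(L ∪ C)*|`. Now `L ∪ C` consists of the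
subintervals of `I₀` not strictly below a stopping interval; it grows with `Y`, so
`Y ↦ |τ(L ∪ C)*|` is monotone and Knaster–Tarski provides such a `Y`. It is positive since
`I₀ ∈ L ∪ C`, and finite. -/

open MeasureTheory

namespace DI

instance : Countable DI :=
  Function.Injective.countable (f := fun I : DI => (I.n, I.k)) fun ⟨_, _, _⟩ ⟨_, _, _⟩ h => by
    cases h; rfl

lemma mem_carrier_iff {I : DI} {x : ℝ} : x ∈ I.carrier ↔ 0 ≤ x ∧ ⌊x * 2 ^ I.n⌋₊ = I.k := by
  have h2 : (0 : ℝ) < 2 ^ I.n := by positivity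
  rw [carrier, Set.mem_Ico, div_le_iff₀ h2, lt_div_iff₀ h2]
  constructor
  · rintro ⟨hk, hk1⟩
    have hx : 0 ≤ x * 2 ^ I.n := le_trans (Nat.cast_nonneg _) hk
    exact ⟨nonneg_of_mul_nonneg_left hx h2, (Nat.floor_eq_iff hx).2 ⟨hk, hk1⟩⟩
  · rintro ⟨hx, hk⟩
    exact (Nat.floor_eq_iff (by positivity)).1 hk

lemma left_mem_carrier (I : DI) : (I.k : ℝ) / 2 ^ I.n ∈ I.carrier :=
  Set.left_mem_Ico.2 (div_lt_div_of_pos_right (lt_add_one _) (by positivity))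

lemma floor_mul_two_pow_eq_div (x : ℝ) {m n : ℕ} (h : m ≤ n) :
    ⌊x * 2 ^ m⌋₊ = ⌊x * 2 ^ n⌋₊ / 2 ^ (n - m) := by
  have h2 : (2 : ℝ) ^ n = 2 ^ m * 2 ^ (n - m) := by rw [← pow_add, Nat.add_sub_cancel' h]
  rw [← Nat.floor_div_natCast, Nat.cast_pow, Nat.cast_ofNat, h2, ← mul_assoc,
    mul_div_cancel_right₀ _ (by positivity)]

lemma volume_carrier (I : DI) : volume I.carrier = I.len := by
  rw [carrier, Real.volume_Ico, len, ← sub_div, add_sub_cancel_left, inv_pow, one_div]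

lemma len_ne_zero_s5 (I : DI) : I.len ≠ 0 :=
  (ENNReal.ofReal_pos.2 (by positivity)).ne'

lemma len_ne_top_s5 (I : DI) : I.len ≠ ⊤ := ENNReal.ofReal_ne_top

lemma carrier_subset_Ico (I : DI) : I.carrier ⊆ Set.Ico 0 1 := by
  intro x hx
  obtain ⟨hx0, hk⟩ := mem_carrier_iff.1 hx
  have h2 : (0 : ℝ) < 2 ^ I.n := by positivity
  have hlt : x * 2 ^ I.n < (2 ^ I.n : ℕ) := (Nat.floor_lt (by positivity)).1 (hk ▸ I.hk)
  rw [Nat.cast_pow, Nat.cast_ofNat] at hlt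
  exact ⟨hx0, (mul_lt_iff_lt_one_left h2).1 hlt⟩

lemma n_le_of_subset {I K : DI} (h : I.carrier ⊆ K.carrier) : K.n ≤ I.n := by
  have hlen : I.len ≤ K.len := by
    simpa only [volume_carrier] using measure_mono (μ := volume) h
  rw [len, len, ENNReal.ofReal_le_ofReal_iff (by positivity)] at hlen
  exact (pow_le_pow_iff_right_of_lt_one₀ (by norm_num) (by norm_num)).1 hlen

lemma eq_of_subset_of_n_le {I K : DI} (h : I.carrier ⊆ K.carrier) (hn : I.n ≤ K.n) : I = K := by
  have hn' : I.n = K.n := le_antisymm hn (n_le_of_subset h)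
  have hk : I.k = K.k := by
    have hk := (mem_carrier_iff.1 (h I.left_mem_carrier)).2
    rwa [← hn', div_mul_cancel₀ _ (by positivity), Nat.floor_natCast] at hk
  obtain ⟨n, k, _⟩ := I
  obtain ⟨n', k', _⟩ := K
  cases hn'
  cases hk
  rfl

lemma subset_of_n_le_of_not_disjoint {I K : DI} (hn : K.n ≤ I.n)
    (h : ¬Disjoint I.carrier K.carrier) : I.carrier ⊆ K.carrier := by
  obtain ⟨x, hxI, hxK⟩ := Set.not_disjoint_iff.1 h
  rw [mem_carrier_iff] at hxI hxK
  intro y hy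
  rw [mem_carrier_iff] at hy ⊢
  refine ⟨hy.1, ?_⟩
  rw [floor_mul_two_pow_eq_div y hn, hy.2, ← hxI.2, ← floor_mul_two_pow_eq_div x hn, hxK.2]

lemma subset_or_subset_of_not_disjoint {I K : DI} (h : ¬Disjoint I.carrier K.carrier) :
    I.carrier ⊆ K.carrier ∨ K.carrier ⊆ I.carrier :=
  (le_total K.n I.n).imp (subset_of_n_le_of_not_disjoint · h)
    (subset_of_n_le_of_not_disjoint · (fun h' => h h'.symm))

end DI

lemma exists_mem_maxSet_subset {S : Set DI} {I : DI} (hI : I ∈ S) :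
    ∃ J ∈ maxSet S, I.carrier ⊆ J.carrier := by
  classical
  have hP : ∃ m, ∃ J ∈ S, I.carrier ⊆ J.carrier ∧ J.n = m := ⟨I.n, I, hI, subset_rfl, rfl⟩
  obtain ⟨J, hJS, hIJ, hJn⟩ := Nat.find_spec hP
  refine ⟨J, ⟨hJS, fun K hK hJK => DI.eq_of_subset_of_n_le hJK ?_⟩, hIJ⟩
  exact hJn ▸ Nat.find_min' hP ⟨K, hK, hIJ.trans hJK, rfl⟩

lemma pairwise_disjoint_maxSet (S : Set DI) :
    (maxSet S).Pairwise fun I K => Disjoint I.carrier K.carrier := by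
  intro I hI K hK hne
  by_contra h
  rcases DI.subset_or_subset_of_not_disjoint h with hIK | hKI
  · exact hne (hI.2 K hK.1 hIK)
  · exact hne (hK.2 I hI.1 hKI).symm

lemma covMeas_mono {S T : Set DI} (h : S ⊆ T) : covMeas S ≤ covMeas T :=
  measure_mono (Set.biUnion_subset_biUnion_left h)

lemma covMeas_union_le (S T : Set DI) : covMeas (S ∪ T) ≤ covMeas S + covMeas T := by
  rw [covMeas, Set.biUnion_union]
  exact measure_union_le _ _

lemma len_le_covMeas {S : Set DI} {I : DI} (hI : I ∈ S) : I.len ≤ covMeas S :=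
  I.volume_carrier ▸ measure_mono (Set.subset_biUnion_of_mem hI)

lemma covMeas_ne_top (S : Set DI) : covMeas S ≠ ⊤ :=
  ne_top_of_le_ne_top (by simp) <|
    measure_mono (μ := volume) (Set.iUnion₂_subset fun I _ => I.carrier_subset_Ico)

lemma tsum_len_le_of_carlesonLE {D : Set DI} {M : ENNReal} (hD : CarlesonLE D M) :
    ∑' I : D, I.1.len ≤ M * covMeas D := by
  choose f hf hsub using fun I : D => exists_mem_maxSet_subset I.2
  calc ∑' I : D, I.1.len
      ≤ ∑' p : (Σ J : maxSet D, {I : DI // I ∈ D ∧ I.carrier ⊆ J.1.carrier}), p.2.1.len :=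
        ENNReal.tsum_comp_le_tsum_of_injective
          (f := fun I : D => (⟨⟨f I, hf I⟩, ⟨I.1, I.2, hsub I⟩⟩ :
            Σ J : maxSet D, {I : DI // I ∈ D ∧ I.carrier ⊆ J.1.carrier}))
          (fun I I' h => Subtype.ext (congrArg (fun p => p.2.1) h)) (fun p => p.2.1.len)
    _ = ∑' J : maxSet D, carlesonSum D J.1 := ENNReal.tsum_sigma' _
    _ ≤ ∑' J : maxSet D, M * J.1.len := ENNReal.tsum_le_tsum fun J => hD J.1
    _ = M * volume (⋃ J : maxSet D, J.1.carrier) := by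
        rw [ENNReal.tsum_mul_left, measure_iUnion
          (fun J J' h => pairwise_disjoint_maxSet D J.2 J'.2 (Subtype.coe_ne_coe.2 h))
          (fun J => measurableSet_Ico)]
        simp only [DI.volume_carrier]
    _ ≤ M * covMeas D := by
        gcongr
        exact measure_mono (Set.iUnion_subset fun J => Set.subset_biUnion_of_mem J.2.1)

section Stopping

variable (τ : DI → DI) (A : ENNReal) (I₀ : DI)

def stoppingSet (Y : ENNReal) : Set DI :=
  {I | I.carrier ⊆ I₀.carrier ∧ A * Y * I.len < (τ I).len * I₀.len}

def notStrictlyBelow (S : Set DI) : Set DI :=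
  {I | I.carrier ⊆ I₀.carrier ∧ ∀ J ∈ S, I.carrier ⊆ J.carrier → I = J}

variable {τ A I₀}

lemma stoppingSet_anti : Antitone (stoppingSet τ A I₀) :=
  fun _ _ h _ hI => ⟨hI.1, lt_of_le_of_lt (by gcongr) hI.2⟩

lemma notStrictlyBelow_anti {S T : Set DI} (h : S ⊆ T) :
    notStrictlyBelow I₀ T ⊆ notStrictlyBelow I₀ S :=
  fun _ hI => ⟨hI.1, fun J hJ => hI.2 J (h hJ)⟩

lemma self_mem_notStrictlyBelow {S : Set DI} (hS : ∀ J ∈ S, J.carrier ⊆ I₀.carrier) :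
    I₀ ∈ notStrictlyBelow I₀ S :=
  ⟨subset_rfl, fun J hJ h => DI.eq_of_subset_of_n_le h (DI.n_le_of_subset (hS J hJ))⟩

lemma maxSet_subset_notStrictlyBelow {S : Set DI} (hS : ∀ J ∈ S, J.carrier ⊆ I₀.carrier) :
    maxSet S ⊆ notStrictlyBelow I₀ S :=
  fun I hI => ⟨hS I hI.1, hI.2⟩

lemma notStrictlyBelow_subset_union (S : Set DI) :
    notStrictlyBelow I₀ S ⊆
      {I | I.carrier ⊆ I₀.carrier ∧ ∀ L ∈ maxSet S, ¬ I.carrier ⊆ L.carrier} ∪ maxSet S := by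
  intro I hI
  by_cases h : ∃ L ∈ maxSet S, I.carrier ⊆ L.carrier
  · obtain ⟨L, hL, hIL⟩ := h
    exact Or.inr (hI.2 L hL.1 hIL ▸ hL)
  · exact Or.inl ⟨hI.1, fun L hL hIL => h ⟨L, hL, hIL⟩⟩

variable (τ A I₀) in
noncomputable def stoppingCover : ENNReal →o ENNReal where
  toFun Y := covMeas (τ '' notStrictlyBelow I₀ (stoppingSet τ A I₀ Y))
  monotone' _ _ h := covMeas_mono (Set.image_mono (notStrictlyBelow_anti (stoppingSet_anti h)))

lemma len_le_of_mem_stoppingSet {Y : ENNReal} (hA : A ≠ 0) (hY : Y ≠ 0) {I : DI}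
    (hI : I ∈ stoppingSet τ A I₀ Y) : I.len ≤ (τ I).len * (I₀.len / (A * Y)) := by
  rw [← mul_div_assoc, ENNReal.le_div_iff_mul_le (Or.inl (mul_ne_zero hA hY))
    (Or.inr (ENNReal.mul_ne_top (τ I).len_ne_top_s5 I₀.len_ne_top_s5)), mul_comm]
  exact hI.2.le

lemma tsum_len_le_of_subset_stoppingSet (hτ : Function.Injective τ) {M Y : ENNReal}
    (hA : A ≠ 0) (hY : Y ≠ 0) (hY' : Y ≠ ⊤) {C : Set DI} (hC : C ⊆ stoppingSet τ A I₀ Y)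
    (hCM : CarlesonLE (τ '' C) M) (hCY : covMeas (τ '' C) ≤ Y) :
    ∑' L : C, L.1.len ≤ M * I₀.len / A :=
  calc ∑' L : C, L.1.len
      ≤ ∑' L : C, (τ L).len * (I₀.len / (A * Y)) :=
        ENNReal.tsum_le_tsum fun L => len_le_of_mem_stoppingSet hA hY (hC L.2)
    _ = (∑' K : τ '' C, K.1.len) * (I₀.len / (A * Y)) := by
        rw [ENNReal.tsum_mul_right, tsum_image _ hτ.injOn]
    _ ≤ M * Y * (I₀.len / (A * Y)) := by
        gcongr
        exact (tsum_len_le_of_carlesonLE hCM).trans (by gcongr)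
    _ = M * I₀.len / A := by
        rw [← mul_div_assoc, mul_right_comm, ENNReal.mul_div_mul_right _ _ hY hY']

lemma len_div_len_le_of_not_mem_stoppingSet {Y : ENNReal} {I : DI}
    (hI : I.carrier ⊆ I₀.carrier) (hIS : I ∉ stoppingSet τ A I₀ Y) :
    (τ I).len / I.len ≤ A * Y / I₀.len := by
  rw [ENNReal.div_le_iff I.len_ne_zero_s5 I.len_ne_top_s5, div_eq_mul_inv, mul_right_comm, ← div_eq_mul_inv,
    ENNReal.le_div_iff_mul_le (Or.inl I₀.len_ne_zero_s5) (Or.inl I₀.len_ne_top_s5)]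
  exact not_lt.1 fun h => hIS ⟨hI, h⟩

end Stopping

/-- Main Lemma: if `⟦τ(E)⟧ ≤ M` for every collection `E` of pairwise disjoint dyadic
intervals, then for `A ≥ 1` and `I₀` there is a pairwise disjoint collection `C` of
dyadic subintervals of `I₀` with `∑_{L∈C}|L| ≤ M|I₀|/A` and, for `L = Q(I₀) \ Q(C)`,
`|τ(I)|/|I| ≤ A (|τ(L)*| + |τ(C)*|)/|I₀|` for all `I ∈ L`. -/
theorem stmt5 (τ : DI → DI) (hτ : Function.Injective τ) (M : ENNReal)
    (hM : ∀ E : Set DI, (E.Pairwise fun I K => Disjoint I.carrier K.carrier) →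
      CarlesonLE (τ '' E) M)
    (A : ENNReal) (hA : 1 ≤ A) (I₀ : DI) :
    ∃ C : Set DI,
      (∀ L ∈ C, L.carrier ⊆ I₀.carrier) ∧
      (C.Pairwise fun I K => Disjoint I.carrier K.carrier) ∧
      (∑' L : C, L.1.len ≤ M * I₀.len / A) ∧
      ∀ I : DI, I.carrier ⊆ I₀.carrier → (∀ L ∈ C, ¬ I.carrier ⊆ L.carrier) →
        (τ I).len / I.len ≤
          A * (covMeas (τ '' {K : DI | K.carrier ⊆ I₀.carrier ∧
                ∀ L ∈ C, ¬ K.carrier ⊆ L.carrier}) +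
              covMeas (τ '' C)) / I₀.len := by
  set Y := OrderHom.gfp (stoppingCover τ A I₀)
  set S := stoppingSet τ A I₀ Y
  have hS : ∀ J ∈ S, J.carrier ⊆ I₀.carrier := fun J hJ => hJ.1
  have hfix : covMeas (τ '' notStrictlyBelow I₀ S) = Y := (stoppingCover τ A I₀).map_gfp
  have hY0 : Y ≠ 0 := hfix ▸ ne_bot_of_le_ne_bot (τ I₀).len_ne_zero_s5
    (len_le_covMeas (Set.mem_image_of_mem τ (self_mem_notStrictlyBelow hS)))
  have hCY : covMeas (τ '' maxSet S) ≤ Y :=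
    hfix ▸ covMeas_mono (Set.image_mono (maxSet_subset_notStrictlyBelow hS))
  have hYL : Y ≤ covMeas (τ '' _) + covMeas (τ '' maxSet S) := hfix ▸ (covMeas_mono (Set.image_mono (notStrictlyBelow_subset_union S))).trans
    (Set.image_union τ _ _ ▸ covMeas_union_le _ _)
  refine ⟨maxSet S, fun L hL => hS L hL.1, pairwise_disjoint_maxSet S,
    tsum_len_le_of_subset_stoppingSet hτ (one_pos.trans_le hA).ne' hY0 (hfix ▸ covMeas_ne_top _)
      (fun L hL => hL.1) (hM _ (pairwise_disjoint_maxSet S)) hCY, fun I hI hIC => ?_⟩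
  have hIS : I ∉ S := fun hIS =>
    let ⟨J, hJ, hIJ⟩ := exists_mem_maxSet_subset hIS
    hIC J hJ hIJ
  calc (τ I).len / I.len ≤ A * Y / I₀.len := len_div_len_le_of_not_mem_stoppingSet hI hIS
    _ ≤ _ := by gcongr
end

section
/- Let τ be a rearrangement of dyadic intervals such that T h_I = h_{τ(I)} extends to a bounded operator on dyadic BMO with norm ‖T‖. Then for every collection E of dyadic intervals, ⟦τ(E)⟧ ≤ ‖T‖² ⟦E⟧, where ⟦·⟧ denotes the Carleson constant. -/
/-!
The squared BMO norm of the 0/1 coefficient sequence of a collection `L` is exactly `⟦L⟧`.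
For a fixed `J`, apply `T` to the indicator of `E_J = {I ∈ E : τ(I) ⊆ J}`; since `τ` is
injective, its image is the indicator of `τ(E_J)`, the part of `τ(E)` below `J`. Hence the
Carleson quotient of `τ(E)` at `J` is at most `⟦τ(E_J)⟧ ≤ ‖T‖² ⟦E_J⟧ ≤ ‖T‖² ⟦E⟧`.
-/

open MeasureTheory

lemma carlesonSum_eq_tsum_indicator (L : Set DI) (J : DI) :
    carlesonSum L J = ∑' I, {I | I ∈ L ∧ I.carrier ⊆ J.carrier}.indicator DI.len I :=
  tsum_subtype {I | I ∈ L ∧ I.carrier ⊆ J.carrier} DI.len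

lemma carlesonSum_mono {L L' : Set DI} (h : L ⊆ L') (J : DI) :
    carlesonSum L J ≤ carlesonSum L' J := by
  simp only [carlesonSum_eq_tsum_indicator]
  have hsub : {I | I ∈ L ∧ I.carrier ⊆ J.carrier} ⊆ {I | I ∈ L' ∧ I.carrier ⊆ J.carrier} :=
    fun _ hI => ⟨h hI.1, hI.2⟩
  exact ENNReal.tsum_le_tsum fun I => Set.indicator_le_indicator_of_subset hsub (fun _ => zero_le) I

lemma carlesonConst_mono {L L' : Set DI} (h : L ⊆ L') : carlesonConst L ≤ carlesonConst L' :=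
  iSup_mono fun J => ENNReal.div_le_div_right (carlesonSum_mono h J) _

lemma carlesonSum_inter_subset (L : Set DI) (J : DI) :
    carlesonSum (L ∩ {I | I.carrier ⊆ J.carrier}) J = carlesonSum L J := by
  simp only [carlesonSum_eq_tsum_indicator, Set.mem_inter_iff, Set.mem_ofPred_eq, and_self_right]

lemma carlesonSum_div_len_le_carlesonConst (L : Set DI) (J : DI) :
    carlesonSum L J / J.len ≤ carlesonConst L :=
  le_iSup (fun J => carlesonSum L J / J.len) J

lemma ofReal_sq_indicator_one_mul_len (L : Set DI) (I : DI) :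
    ENNReal.ofReal ((L.indicator 1 I : ℝ) ^ 2) * I.len = L.indicator DI.len I := by
  by_cases hI : I ∈ L <;> simp [hI]

lemma bmoSq_indicator_one (L : Set DI) : bmoSq (L.indicator 1) = carlesonConst L := by
  refine iSup_congr fun J => congrArg (· / J.len) ?_
  simp only [ofReal_sq_indicator_one_mul_len]
  refine (tsum_subtype {I : DI | I.carrier ⊆ J.carrier} (L.indicator DI.len)).trans ?_
  rw [Set.indicator_indicator, carlesonSum_eq_tsum_indicator, Set.inter_comm]
  rfl

lemma haarCompat_indicator_one {τ : DI → DI} (hτ : Function.Injective τ) (L : Set DI) :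
    HaarCompat τ (L.indicator 1) ((τ '' L).indicator 1) := by
  refine ⟨fun I => Set.indicator_image hτ, fun K hK => Set.indicator_of_notMem ?_ _⟩
  rintro ⟨I, -, rfl⟩
  exact hK ⟨I, rfl⟩

/-- If `T h_I = h_{τ(I)}` is bounded on dyadic BMO (with `C = ‖T‖²`), then
`⟦τ(E)⟧ ≤ ‖T‖² ⟦E⟧` for every collection `E` of dyadic intervals. -/
theorem stmt9 (τ : DI → DI) (hτ : Function.Injective τ) (C : ENNReal)
    (hT : ∀ x y : DI → ℝ, HaarCompat τ x y → bmoSq y ≤ C * bmoSq x)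
    (E : Set DI) :
    carlesonConst (τ '' E) ≤ C * carlesonConst E := by
  refine iSup_le fun J => ?_
  set EJ := E ∩ τ ⁻¹' {K | K.carrier ⊆ J.carrier}
  calc carlesonSum (τ '' E) J / J.len
      = carlesonSum (τ '' EJ) J / J.len := by
        rw [Set.image_inter_preimage, carlesonSum_inter_subset]
    _ ≤ carlesonConst (τ '' EJ) := carlesonSum_div_len_le_carlesonConst _ J
    _ = bmoSq ((τ '' EJ).indicator 1) := (bmoSq_indicator_one _).symm
    _ ≤ C * bmoSq (EJ.indicator 1) := hT _ _ (haarCompat_indicator_one hτ EJ)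
    _ = C * carlesonConst EJ := by rw [bmoSq_indicator_one]
    _ ≤ C * carlesonConst E := by gcongr; exact carlesonConst_mono Set.inter_subset_left
end
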